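/- arXiv:2508.16203 — 4 statements merged into one kernel-verified Lean document; each statement's English description precedes it below -/
import Mathlib

section
/- For 0 < n < 1 and R > 0, one has ∫_{nR}^{R} (√(R^2 - x^2) - x·arccos(x/R)) dx = ((1/4 + n^2/2)·arccos(n) - (3/4)·n·√(1-n^2))·R^2. -/
/-! The substitution `x = R t` pulls out a factor `R ^ 2`, and on `[-1, 1]` the normalized
integrand `√(1 - t²) - t arccos t` has the antiderivative
`G t = 3/4 t √(1 - t²) - (1/4 + t²/2) arccos t`, which vanishes at `t = 1`;
the claimed value is `-G n · R ^ 2`. -/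

open Real intervalIntegral

theorem hasDerivAt_mul_sqrt_one_sub_sq_sub_mul_arccos {t : ℝ} (ht : t ∈ Set.Ioo (-1) 1) :
    HasDerivAt (fun t => 3 / 4 * t * √(1 - t ^ 2) - (1 / 4 + t ^ 2 / 2) * arccos t)
      (√(1 - t ^ 2) - t * arccos t) t := by
  obtain ⟨ht₁, ht₂⟩ := ht
  have hpos : 0 < 1 - t ^ 2 := by nlinarith
  have hsqrt_pos : 0 < √(1 - t ^ 2) := sqrt_pos.mpr hpos
  have hsq : √(1 - t ^ 2) ^ 2 = 1 - t ^ 2 := sq_sqrt hpos.le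
  have hsqrt : HasDerivAt (fun t => √(1 - t ^ 2)) (-t / √(1 - t ^ 2)) t := by
    convert ((hasDerivAt_pow 2 t).const_sub 1).sqrt hpos.ne' using 1
    field_simp
    ring
  have harccos := hasDerivAt_arccos ht₁.ne' ht₂.ne
  have hlin : HasDerivAt (fun t : ℝ => 3 / 4 * t) (3 / 4) t := by
    simpa using (hasDerivAt_id t).const_mul (3 / 4 : ℝ)
  have hquad : HasDerivAt (fun t : ℝ => 1 / 4 + t ^ 2 / 2) t t := by
    simpa using ((hasDerivAt_pow 2 t).div_const 2).const_add (1 / 4 : ℝ)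
  have hG := (hlin.mul hsqrt).sub (hquad.mul harccos)
  refine hG.congr_deriv ?_
  field_simp
  linear_combination -2 * hsq

theorem integral_sqrt_one_sub_sq_sub_mul_arccos {a b : ℝ} (ha : -1 ≤ a) (hab : a ≤ b)
    (hb : b ≤ 1) :
    ∫ t in a..b, (√(1 - t ^ 2) - t * arccos t) =
      (3 / 4 * b * √(1 - b ^ 2) - (1 / 4 + b ^ 2 / 2) * arccos b) -
        (3 / 4 * a * √(1 - a ^ 2) - (1 / 4 + a ^ 2 / 2) * arccos a) := by
  refine integral_eq_sub_of_hasDerivAt_of_le hab (Continuous.continuousOn (by fun_prop))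
    (fun t ht => hasDerivAt_mul_sqrt_one_sub_sq_sub_mul_arccos
      ⟨ha.trans_lt ht.1, ht.2.trans_le hb⟩) (Continuous.intervalIntegrable (by fun_prop) _ _)

theorem integral_sqrt_sq_sub_sq_sub_mul_arccos_div {R : ℝ} (hR : 0 < R) (a b : ℝ) :
    ∫ x in a * R..b * R, (√(R ^ 2 - x ^ 2) - x * arccos (x / R)) =
      R ^ 2 * ∫ t in a..b, (√(1 - t ^ 2) - t * arccos t) := by
  have hscale (t : ℝ) : √(R ^ 2 - (t * R) ^ 2) - t * R * arccos (t * R / R) =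
      R * (√(1 - t ^ 2) - t * arccos t) := by
    rw [show R ^ 2 - (t * R) ^ 2 = R ^ 2 * (1 - t ^ 2) by ring, sqrt_mul (sq_nonneg R),
      sqrt_sq hR.le, mul_div_cancel_right₀ t hR.ne']
    ring
  have hsubst := integral_comp_mul_right (a := a) (b := b)
    (fun x => √(R ^ 2 - x ^ 2) - x * arccos (x / R)) hR.ne'
  simp only [hscale, integral_const_mul, smul_eq_mul] at hsubst
  rw [eq_inv_mul_iff_mul_eq₀ hR.ne'] at hsubst
  rw [← hsubst]
  ring

theorem stmt_8 (n R : ℝ) (hn0 : 0 < n) (hn1 : n < 1) (hR : 0 < R) :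
    ∫ x in (n * R)..R, (Real.sqrt (R ^ 2 - x ^ 2) - x * Real.arccos (x / R)) =
      ((1 / 4 + n ^ 2 / 2) * Real.arccos n - 3 / 4 * n * Real.sqrt (1 - n ^ 2)) * R ^ 2 := by
  have h := integral_sqrt_sq_sub_sq_sub_mul_arccos_div hR n 1
  rw [one_mul] at h
  rw [h, integral_sqrt_one_sub_sq_sub_mul_arccos (by linarith) hn1.le le_rfl]
  simp only [one_pow, sub_self, sqrt_zero, mul_zero, arccos_one, zero_sub, neg_sub]
  ring
end

section
/- For m ≥ 1 and R > m, one has |∫_m^R √(1 - (m² - 1/4)/x²) dx - ∫_m^R √(1 - m²/x²) dx| ≤ π/(4m). -/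
/-!
With `c² = m² - 1/4`, rationalizing gives
`√(1 - c²/x²) - √(1 - m²/x²) ≤ (1/4) / (x √(x² - c²))` for `x ≥ m`, and the majorant has the
primitive `arctan (√(x² - c²) / c) / (4c)`, which increases by less than `π / (8c) ≤ π / (4m)`.
-/

open Real

theorem Real.sqrt_sub_sqrt_le_div_sqrt {a b : ℝ} (hba : b ≤ a) :
    √a - √b ≤ (a - b) / √a := by
  rcases (sqrt_nonneg a).eq_or_lt with ha | ha
  · rw [← ha, div_zero, zero_sub, neg_nonpos]
    exact sqrt_nonneg b
  rw [le_div_iff₀ ha]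
  have hb : b ≤ √b * √a := by
    rcases le_or_gt b 0 with hb | hb
    · exact hb.trans (by positivity)
    · calc b = √b * √b := (mul_self_sqrt hb.le).symm
        _ ≤ √b * √a := by gcongr
  nlinarith [mul_self_sqrt (sqrt_pos.mp ha).le]

theorem hasDerivAt_arctan_sqrt_sq_sub_sq_div {c x : ℝ} (hc : c ≠ 0) (hcx : c ^ 2 < x ^ 2) :
    HasDerivAt (fun y => arctan (√(y ^ 2 - c ^ 2) / c) / c) (1 / (x * √(x ^ 2 - c ^ 2))) x := by
  have hpos : 0 < x ^ 2 - c ^ 2 := sub_pos.mpr hcx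
  have hx : x ≠ 0 := by rintro rfl; nlinarith
  have hs : √(x ^ 2 - c ^ 2) ^ 2 = x ^ 2 - c ^ 2 := sq_sqrt hpos.le
  have hs0 : √(x ^ 2 - c ^ 2) ≠ 0 := (sqrt_pos.mpr hpos).ne'
  have hinner : HasDerivAt (fun y => y ^ 2 - c ^ 2) (2 * x) x := by
    simpa using (hasDerivAt_pow 2 x).sub_const (c ^ 2)
  refine (((hinner.sqrt hpos.ne').div_const c).arctan).div_const c |>.congr_deriv ?_
  field_simp
  rw [hs]
  ring

section

variable {a b c : ℝ}

theorem intervalIntegrable_sqrt_one_sub_div_sq (k : ℝ) (ha : 0 < a) (hab : a ≤ b) :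
    IntervalIntegrable (fun x => √(1 - k / x ^ 2)) MeasureTheory.volume a b := by
  refine ContinuousOn.intervalIntegrable fun x hx => ContinuousAt.continuousWithinAt ?_
  have : x ≠ 0 := by rw [Set.uIcc_of_le hab] at hx; exact (ha.trans_le hx.1).ne'
  fun_prop (disch := positivity)

theorem sq_lt_sq_of_mem_uIcc (hc : 0 < c) (hca : c < a) (hab : a ≤ b) {x : ℝ}
    (hx : x ∈ Set.uIcc a b) : c ^ 2 < x ^ 2 := by
  rw [Set.uIcc_of_le hab] at hx
  exact pow_lt_pow_left₀ (hca.trans_le hx.1) hc.le two_ne_zero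

theorem intervalIntegrable_one_div_mul_sqrt_sq_sub_sq (hc : 0 < c) (hca : c < a) (hab : a ≤ b) :
    IntervalIntegrable (fun x => 1 / (x * √(x ^ 2 - c ^ 2))) MeasureTheory.volume a b := by
  refine ContinuousOn.intervalIntegrable fun x hx => ContinuousAt.continuousWithinAt ?_
  have hpos : 0 < x ^ 2 - c ^ 2 := sub_pos.mpr (sq_lt_sq_of_mem_uIcc hc hca hab hx)
  have hx : x ≠ 0 := by rintro rfl; nlinarith
  have : x * √(x ^ 2 - c ^ 2) ≠ 0 := mul_ne_zero hx (sqrt_pos.mpr hpos).ne'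
  fun_prop (disch := assumption)

theorem integral_one_div_mul_sqrt_sq_sub_sq (hc : 0 < c) (hca : c < a) (hab : a ≤ b) :
    ∫ x in a..b, 1 / (x * √(x ^ 2 - c ^ 2)) =
      arctan (√(b ^ 2 - c ^ 2) / c) / c - arctan (√(a ^ 2 - c ^ 2) / c) / c :=
  intervalIntegral.integral_eq_sub_of_hasDerivAt
    (fun _ hx => hasDerivAt_arctan_sqrt_sq_sub_sq_div hc.ne' (sq_lt_sq_of_mem_uIcc hc hca hab hx))
    (intervalIntegrable_one_div_mul_sqrt_sq_sub_sq hc hca hab)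

theorem integral_one_div_mul_sqrt_sq_sub_sq_le (hc : 0 < c) (hca : c < a) (hab : a ≤ b) :
    ∫ x in a..b, 1 / (x * √(x ^ 2 - c ^ 2)) ≤ π / (2 * c) := by
  rw [integral_one_div_mul_sqrt_sq_sub_sq hc hca hab]
  have hb : arctan (√(b ^ 2 - c ^ 2) / c) < π / 2 := arctan_lt_pi_div_two _
  have ha : 0 ≤ arctan (√(a ^ 2 - c ^ 2) / c) := arctan_nonneg.mpr (by positivity)
  rw [div_sub_div_same, div_le_div_iff₀ hc (by positivity)]
  nlinarith

end

theorem sqrt_one_sub_div_sq_sub_sqrt_one_sub_div_sq_le {b c x : ℝ} (hx : 0 < x)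
    (hcx : c ^ 2 < x ^ 2) (hcb : c ^ 2 ≤ b) :
    √(1 - c ^ 2 / x ^ 2) - √(1 - b / x ^ 2) ≤ (b - c ^ 2) / (x * √(x ^ 2 - c ^ 2)) := by
  have hpos : 0 < x ^ 2 - c ^ 2 := sub_pos.mpr hcx
  have hsqrt : √(1 - c ^ 2 / x ^ 2) = √(x ^ 2 - c ^ 2) / x := by
    rw [← sqrt_sq hx.le, ← sqrt_div' _ (sq_nonneg x), sqrt_sq hx.le, sub_div,
      div_self (by positivity)]
  calc √(1 - c ^ 2 / x ^ 2) - √(1 - b / x ^ 2)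
      ≤ ((1 - c ^ 2 / x ^ 2) - (1 - b / x ^ 2)) / √(1 - c ^ 2 / x ^ 2) :=
        sqrt_sub_sqrt_le_div_sqrt (by gcongr)
    _ = (b - c ^ 2) / (x * √(x ^ 2 - c ^ 2)) := by
        rw [hsqrt]
        field_simp
        ring

theorem abs_integral_sqrt_one_sub_div_sq_sub_le {a b c d : ℝ} (hc : 0 < c) (hca : c < a)
    (hab : a ≤ b) (hcd : c ^ 2 ≤ d) :
    |(∫ x in a..b, √(1 - c ^ 2 / x ^ 2)) - ∫ x in a..b, √(1 - d / x ^ 2)| ≤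
      (d - c ^ 2) * (π / (2 * c)) := by
  have ha : 0 < a := hc.trans hca
  rw [← intervalIntegral.integral_sub (intervalIntegrable_sqrt_one_sub_div_sq _ ha hab)
    (intervalIntegrable_sqrt_one_sub_div_sq _ ha hab)]
  have hpointwise : ∀ x ∈ Set.Ioc a b,
      ‖√(1 - c ^ 2 / x ^ 2) - √(1 - d / x ^ 2)‖ ≤ (d - c ^ 2) * (1 / (x * √(x ^ 2 - c ^ 2))) := by
    intro x hx
    have hx' : x ∈ Set.uIcc a b := Set.Icc_subset_uIcc (Set.Ioc_subset_Icc_self hx)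
    rw [Real.norm_eq_abs, abs_of_nonneg (sub_nonneg.mpr (by gcongr)), mul_one_div]
    exact sqrt_one_sub_div_sq_sub_sqrt_one_sub_div_sq_le (ha.trans hx.1)
      (sq_lt_sq_of_mem_uIcc hc hca hab hx') hcd
  calc _ ≤ ∫ x in a..b, (d - c ^ 2) * (1 / (x * √(x ^ 2 - c ^ 2))) :=
        intervalIntegral.norm_integral_le_of_norm_le hab (MeasureTheory.ae_of_all _ hpointwise)
          ((intervalIntegrable_one_div_mul_sqrt_sq_sub_sq hc hca hab).const_mul _)
    _ = (d - c ^ 2) * ∫ x in a..b, 1 / (x * √(x ^ 2 - c ^ 2)) :=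
        intervalIntegral.integral_const_mul _ _
    _ ≤ (d - c ^ 2) * (π / (2 * c)) :=
        mul_le_mul_of_nonneg_left (integral_one_div_mul_sqrt_sq_sub_sq_le hc hca hab)
          (sub_nonneg.mpr hcd)

theorem stmt_14 (m R : ℝ) (hm : 1 ≤ m) (hR : m < R) :
    |(∫ x in m..R, Real.sqrt (1 - (m ^ 2 - 1 / 4) / x ^ 2)) -
        ∫ x in m..R, Real.sqrt (1 - m ^ 2 / x ^ 2)| ≤ Real.pi / (4 * m) := by
  obtain ⟨c, hc, hc2⟩ : ∃ c, 0 < c ∧ c ^ 2 = m ^ 2 - 1 / 4 :=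
    ⟨√(m ^ 2 - 1 / 4), sqrt_pos.mpr (by nlinarith), sq_sqrt (by nlinarith)⟩
  have hcm : c < m := by nlinarith
  have hmc : m ≤ 2 * c := by nlinarith
  calc _ = |(∫ x in m..R, √(1 - c ^ 2 / x ^ 2)) - ∫ x in m..R, √(1 - m ^ 2 / x ^ 2)| := by
        rw [hc2]
    _ ≤ (m ^ 2 - c ^ 2) * (π / (2 * c)) :=
        abs_integral_sqrt_one_sub_div_sq_sub_le hc hcm hR.le (by linarith)
    _ = π / (8 * c) := by
        rw [hc2]
        field_simp
        ring
    _ ≤ π / (4 * m) := div_le_div_of_nonneg_left pi_pos.le (by positivity) (by linarith)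
end

section
/- Let 0 < n < 1 and let δ̃ > 0. Define B_U(n) = P(n/(1+nδ̃)) − n²·P(1/(1+nδ̃)) where P(x) = arccos(x) − x√(1−x²). Then B_U(n) ≥ arccos(n) − n√(1−n²), i.e. the upper-bound constant dominates the lower-bound constant. -/
/-!
The map `y ↦ P(n y) - n² P(y)` is antitone on `[-1, 1]` for `0 ≤ n ≤ 1`: since `P' = -2√(1 - x²)`,
its derivative is `-2n (√(1 - n²y²) - n √(1 - y²)) ≤ 0`. Comparing its values at `y = 1/(1 + nδ)`
and at `y = 1`, where `P(1) = 0`, gives the inequality.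
-/

open Real Set

/-- Twice the area of the segment cut off the unit disc by a chord at distance `x` from the centre. -/
noncomputable def segmentArea (x : ℝ) : ℝ := arccos x - x * √(1 - x ^ 2)

lemma segmentArea_one : segmentArea 1 = 0 := by
  simp [segmentArea]

lemma continuous_segmentArea : Continuous segmentArea := by
  unfold segmentArea
  fun_prop

lemma hasDerivAt_segmentArea {x : ℝ} (hx₁ : -1 < x) (hx₂ : x < 1) :
    HasDerivAt segmentArea (-2 * √(1 - x ^ 2)) x := by
  have hpos : 0 < 1 - x ^ 2 := by nlinarith
  have hs : 0 < √(1 - x ^ 2) := sqrt_pos.mpr hpos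
  have hsq : √(1 - x ^ 2) ^ 2 = 1 - x ^ 2 := sq_sqrt hpos.le
  have hinner : HasDerivAt (fun y : ℝ => 1 - y ^ 2) (-(2 * x)) x := by
    simpa using (hasDerivAt_pow 2 x).const_sub 1
  have hsqrt : HasDerivAt (fun y : ℝ => √(1 - y ^ 2)) (1 / (2 * √(1 - x ^ 2)) * -(2 * x)) x :=
    (hasDerivAt_sqrt hpos.ne').comp x hinner
  refine ((hasDerivAt_arccos hx₁.ne' hx₂.ne).sub ((hasDerivAt_id' x).mul hsqrt)).congr_deriv ?_
  field_simp
  nlinarith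

lemma mul_sqrt_one_sub_sq_le_sqrt_one_sub_mul_sq {n : ℝ} (hn : n ^ 2 ≤ 1) (x : ℝ) :
    n * √(1 - x ^ 2) ≤ √(1 - (n * x) ^ 2) :=
  calc n * √(1 - x ^ 2) ≤ |n| * √(1 - x ^ 2) := by gcongr; exact le_abs_self n
    _ = √(n ^ 2 * (1 - x ^ 2)) := by rw [sqrt_mul (sq_nonneg n), sqrt_sq_eq_abs]
    _ ≤ √(1 - (n * x) ^ 2) := sqrt_le_sqrt (by nlinarith)

lemma antitoneOn_segmentArea_mul_sub {n : ℝ} (hn₀ : 0 ≤ n) (hn₁ : n ≤ 1) :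
    AntitoneOn (fun y => segmentArea (n * y) - n ^ 2 * segmentArea y) (Icc (-1) 1) := by
  have hderiv : ∀ y ∈ Ioo (-1 : ℝ) 1, HasDerivAt
      (fun y => segmentArea (n * y) - n ^ 2 * segmentArea y)
      (-2 * √(1 - (n * y) ^ 2) * n - n ^ 2 * (-2 * √(1 - y ^ 2))) y := by
    rintro y ⟨hy₁, hy₂⟩
    have hny : |n * y| < 1 := by
      rw [abs_mul, abs_of_nonneg hn₀]
      nlinarith [abs_lt.mpr ⟨hy₁, hy₂⟩, abs_nonneg y]
    obtain ⟨hny₁, hny₂⟩ := abs_lt.mp hny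
    have hscaled : HasDerivAt (fun y => segmentArea (n * y)) (-2 * √(1 - (n * y) ^ 2) * n) y :=
      ((hasDerivAt_segmentArea hny₁ hny₂).comp y ((hasDerivAt_id y).const_mul n)).congr_deriv
        (by ring)
    exact hscaled.sub ((hasDerivAt_segmentArea hy₁ hy₂).const_mul (n ^ 2))
  refine antitoneOn_of_deriv_nonpos (convex_Icc _ _)
    ((continuous_segmentArea.comp (continuous_const_mul n)).sub
      (continuous_segmentArea.const_mul _)).continuousOn ?_ ?_ <;> rw [interior_Icc]
  · exact fun y hy => (hderiv y hy).differentiableAt.differentiableWithinAt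
  · intro y hy
    rw [(hderiv y hy).deriv]
    nlinarith [mul_sqrt_one_sub_sq_le_sqrt_one_sub_mul_sq (by nlinarith : n ^ 2 ≤ 1) y]

theorem stmt_16 (n δ : ℝ) (hn0 : 0 < n) (hn1 : n < 1) (hδ : 0 < δ)
    (P : ℝ → ℝ) (hP : ∀ x, P x = Real.arccos x - x * Real.sqrt (1 - x ^ 2)) :
    P (n / (1 + n * δ)) - n ^ 2 * P (1 / (1 + n * δ)) ≥
      Real.arccos n - n * Real.sqrt (1 - n ^ 2) := by
  obtain rfl : P = segmentArea := funext hP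
  set t := 1 / (1 + n * δ)
  have ht₀ : 0 ≤ t := by positivity
  have ht₁ : t ≤ 1 := div_le_one_of_le₀ (by nlinarith) (by positivity)
  have hmono := antitoneOn_segmentArea_mul_sub hn0.le hn1.le ⟨by linarith, ht₁⟩
    ⟨by norm_num, le_rfl⟩ ht₁
  simp only [mul_one, segmentArea_one, mul_zero, sub_zero] at hmono
  rwa [← hP n, ge_iff_le, div_eq_mul_one_div]
end

section
/- Define P3(x) = (1 - x²)^{3/2} on [0,1] and B3(n, δ̃) = P3(n/(1+nδ̃)) − n³·P3(1/(1+nδ̃)) for 0 < n < 1 and δ̃ > 0. Then for fixed n, B3(n, δ̃) → (1 - n²)^{3/2} as δ̃ → 0⁺, and B3(n, δ̃) ≥ (1 - n²)^{3/2} for all δ̃ > 0. -/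
lemma aux_superadd (a b : ℝ) (ha : 0 ≤ a) (hb : 0 ≤ b) :
    a ^ ((3:ℝ)/2) + b ^ ((3:ℝ)/2) ≤ (a + b) ^ ((3:ℝ)/2) := by
  lift a to NNReal using ha
  lift b to NNReal using hb
  have := NNReal.add_rpow_le_rpow_add a b (by norm_num : (1:ℝ) ≤ 3/2)
  exact_mod_cast this

theorem stmt_18 (n : ℝ) (hn0 : 0 < n) (hn1 : n < 1)
    (P3 : ℝ → ℝ) (hP3 : ∀ x ∈ Set.Icc (0 : ℝ) 1, P3 x = (1 - x ^ 2) ^ ((3 : ℝ) / 2))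
    (B3 : ℝ → ℝ)
    (hB3 : ∀ δ : ℝ, 0 < δ → B3 δ = P3 (n / (1 + n * δ)) - n ^ 3 * P3 (1 / (1 + n * δ))) :
    Filter.Tendsto B3 (nhdsWithin 0 (Set.Ioi 0)) (nhds ((1 - n ^ 2) ^ ((3 : ℝ) / 2))) ∧
      ∀ δ : ℝ, 0 < δ → B3 δ ≥ (1 - n ^ 2) ^ ((3 : ℝ) / 2) := by
  have hkey : ∀ δ : ℝ, 0 < δ →
      B3 δ = (1 - (n / (1 + n * δ)) ^ 2) ^ ((3:ℝ)/2)
        - n ^ 3 * (1 - (1 / (1 + n * δ)) ^ 2) ^ ((3:ℝ)/2) := by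
    intro δ hδ
    have hs1 : 1 < 1 + n * δ := by nlinarith
    have hs0 : 0 < 1 + n * δ := by linarith
    have h1 : n / (1 + n * δ) ∈ Set.Icc (0:ℝ) 1 :=
      ⟨by positivity, by rw [div_le_one hs0]; linarith⟩
    have h2 : 1 / (1 + n * δ) ∈ Set.Icc (0:ℝ) 1 :=
      ⟨by positivity, by rw [div_le_one hs0]; linarith⟩
    rw [hB3 δ hδ, hP3 _ h1, hP3 _ h2]
  have hn3 : ∀ t : ℝ, 0 ≤ t → n ^ 3 * t ^ ((3:ℝ)/2) = (n ^ 2 * t) ^ ((3:ℝ)/2) := by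
    intro t ht
    rw [Real.mul_rpow (by positivity) ht]
    congr 1
    rw [← Real.rpow_natCast n 2, ← Real.rpow_natCast n 3,
      ← Real.rpow_mul hn0.le]
    norm_num
  constructor
  · have hg : Filter.Tendsto
        (fun δ : ℝ => (1 - (n / (1 + n * δ)) ^ 2) ^ ((3:ℝ)/2)
          - n ^ 3 * (1 - (1 / (1 + n * δ)) ^ 2) ^ ((3:ℝ)/2))
        (nhdsWithin 0 (Set.Ioi 0)) (nhds ((1 - n ^ 2) ^ ((3 : ℝ) / 2))) := by
      have hc : ContinuousAt
          (fun δ : ℝ => (1 - (n / (1 + n * δ)) ^ 2) ^ ((3:ℝ)/2)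
            - n ^ 3 * (1 - (1 / (1 + n * δ)) ^ 2) ^ ((3:ℝ)/2)) 0 := by
        have hrp : Continuous fun x : ℝ => x ^ ((3:ℝ)/2) :=
          Real.continuous_rpow_const (by norm_num)
        have hden : ContinuousAt (fun δ : ℝ => 1 + n * δ) 0 := by fun_prop
        have hne : (1 + n * (0:ℝ)) ≠ 0 := by norm_num
        fun_prop (disch := simpa using hne)
      have h0 : ((1:ℝ) - (n / (1 + n * 0)) ^ 2) ^ ((3:ℝ)/2)
          - n ^ 3 * (1 - (1 / (1 + n * 0)) ^ 2) ^ ((3:ℝ)/2)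
          = (1 - n ^ 2) ^ ((3 : ℝ) / 2) := by
        norm_num
      have := (hc.continuousWithinAt (s := Set.Ioi 0)).tendsto
      rwa [h0] at this
    refine hg.congr' ?_
    filter_upwards [self_mem_nhdsWithin] with δ hδ
    exact (hkey δ hδ).symm
  · intro δ hδ
    have hs1 : 1 < 1 + n * δ := by nlinarith
    have hs0 : 0 < 1 + n * δ := by linarith
    rw [hkey δ hδ]
    have ht : 0 ≤ 1 - (1 / (1 + n * δ)) ^ 2 := by
      have : (1 / (1 + n * δ)) ≤ 1 := by rw [div_le_one hs0]; linarith
      nlinarith [one_div_pos.mpr hs0]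
    rw [hn3 _ ht]
    have ha : (0:ℝ) ≤ 1 - n ^ 2 := by nlinarith
    have hb : (0:ℝ) ≤ n ^ 2 * (1 - (1 / (1 + n * δ)) ^ 2) := by positivity
    have hsum : (1 - n ^ 2) + n ^ 2 * (1 - (1 / (1 + n * δ)) ^ 2)
        = 1 - (n / (1 + n * δ)) ^ 2 := by
      field_simp
      ring
    have := aux_superadd _ _ ha hb
    rw [hsum] at this
    linarith
end
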